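/- Let Q₁ ⊆ ℝ[x,z] and Q₂ ⊆ ℝ[y,z] be homogeneous ideals, viewed inside S = ℝ[x,y,z]. Then with respect to the lexicographic order x > y > z, In(Q₁ + Q₂) = In(Q₁) + In(Q₂), where In denotes the initial ideal. -/

import Mathlib

open MvPolynomial

/-- The leading monomial (exponent vector) of a polynomial in `ℝ[x,y,z]` with respect to
the lexicographic order `x > y > z` (variables indexed `0 > 1 > 2` via `Fin 3`). -/
noncomputable def leadMon (p : MvPolynomial (Fin 3) ℝ) : Fin 3 →₀ ℕ :=
  if h : p = 0 then 0
  else ofLex ((p.support.image (toLex : (Fin 3 →₀ ℕ) → Lex (Fin 3 →₀ ℕ))).max'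
    (by
      rw [Finset.image_nonempty]
      exact MvPolynomial.support_nonempty.mpr h))

/-- The initial ideal of an ideal of `ℝ[x,y,z]` with respect to the lex order `x > y > z`:
the ideal generated by the leading monomials of its nonzero elements. -/
noncomputable def initialIdeal (I : Ideal (MvPolynomial (Fin 3) ℝ)) :
    Ideal (MvPolynomial (Fin 3) ℝ) :=
  Ideal.span {q | ∃ p ∈ I, p ≠ 0 ∧ q = monomial (leadMon p) (1 : ℝ)}

lemma leadMon_mem_support {p : MvPolynomial (Fin 3) ℝ} (hp : p ≠ 0) :
    leadMon p ∈ p.support := by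
  rw [leadMon, dif_neg hp]
  have h := Finset.max'_mem (p.support.image (toLex : (Fin 3 →₀ ℕ) → Lex (Fin 3 →₀ ℕ)))
    (by rw [Finset.image_nonempty]; exact MvPolynomial.support_nonempty.mpr hp)
  rw [Finset.mem_image] at h
  obtain ⟨e, he, hee⟩ := h
  rw [← hee]
  exact he

lemma le_leadMon {p : MvPolynomial (Fin 3) ℝ} (hp : p ≠ 0) {e : Fin 3 →₀ ℕ}
    (he : e ∈ p.support) : toLex e ≤ toLex (leadMon p) := by
  rw [leadMon, dif_neg hp]
  exact Finset.le_max' _ _ (Finset.mem_image_of_mem _ he)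

lemma leadMon_eq {p : MvPolynomial (Fin 3) ℝ} {μ : Fin 3 →₀ ℕ} (h1 : μ ∈ p.support)
    (h2 : ∀ e ∈ p.support, toLex e ≤ toLex μ) : leadMon p = μ := by
  have hp : p ≠ 0 := by
    intro h; rw [h] at h1; simp at h1
  have := le_leadMon hp h1
  have h3 := h2 _ (leadMon_mem_support hp)
  have : toLex (leadMon p) = toLex μ := le_antisymm h3 this
  exact toLex.injective this

lemma lex_lt_iff3 {a b : Fin 3 →₀ ℕ} :
    toLex a < toLex b ↔ a 0 < b 0 ∨ (a 0 = b 0 ∧ a 1 < b 1) ∨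
      (a 0 = b 0 ∧ a 1 = b 1 ∧ a 2 < b 2) := by
  show Finsupp.Lex _ _ _ _ ↔ _
  rw [Finsupp.lex_def]
  constructor
  · rintro ⟨⟨jv, hjv⟩, hlt, hj⟩
    interval_cases jv
    · exact Or.inl hj
    · exact Or.inr (Or.inl ⟨hlt 0 (by simp [Fin.lt_def]), hj⟩)
    · exact Or.inr (Or.inr ⟨hlt 0 (by simp [Fin.lt_def]), hlt 1 (by simp [Fin.lt_def]), hj⟩)
  · rintro (h | ⟨h0, h⟩ | ⟨h0, h1, h⟩)
    · exact ⟨0, by simp [Fin.lt_def], h⟩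
    · refine ⟨1, ?_, h⟩
      rintro ⟨dv, hdv⟩ hd
      interval_cases dv
      · exact h0
      · exact absurd hd (by simp [Fin.lt_def])
      · exact absurd hd (by simp [Fin.lt_def])
    · refine ⟨2, ?_, h⟩
      rintro ⟨dv, hdv⟩ hd
      interval_cases dv
      · exact h0
      · exact h1
      · exact absurd hd (by simp [Fin.lt_def])

lemma lex_le_iff3 {a b : Fin 3 →₀ ℕ} :
    toLex a ≤ toLex b ↔ a = b ∨ toLex a < toLex b := by
  rw [le_iff_lt_or_eq, or_comm]
  constructor
  · rintro (h | h)
    · exact Or.inl (toLex.injective h)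
    · exact Or.inr h
  · rintro (h | h)
    · exact Or.inl (by rw [h])
    · exact Or.inr h


noncomputable def sliceV (v : Fin 3) (j : ℕ) (p : MvPolynomial (Fin 3) ℝ) :
    MvPolynomial (Fin 3) ℝ :=
  AddMonoidAlgebra.ofCoeff (Finsupp.filter (fun e => e v = 0)
    (Finsupp.comapDomain (· + Finsupp.single v j) (AddMonoidAlgebra.coeff p) ((add_left_injective _).injOn)))

lemma coeff_sliceV (v : Fin 3) (j : ℕ) (e : Fin 3 →₀ ℕ) (p : MvPolynomial (Fin 3) ℝ) :
    coeff e (sliceV v j p) = if e v = 0 then coeff (e + Finsupp.single v j) p else 0 := by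
  show Finsupp.filter _ _ e = _
  rw [Finsupp.filter_apply]
  split
  · rw [Finsupp.comapDomain_apply]; rfl
  · rfl

lemma sliceV_add (v : Fin 3) (j : ℕ) (p q : MvPolynomial (Fin 3) ℝ) :
    sliceV v j (p + q) = sliceV v j p + sliceV v j q := by
  apply MvPolynomial.ext
  intro e
  simp only [coeff_sliceV, coeff_add]
  split <;> simp

lemma sliceV_sum {X : Type*} (v : Fin 3) (j : ℕ) (s : Finset X)
    (f : X → MvPolynomial (Fin 3) ℝ) :
    sliceV v j (∑ x ∈ s, f x) = ∑ x ∈ s, sliceV v j (f x) := by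
  classical
  induction s using Finset.induction with
  | empty => apply MvPolynomial.ext; intro e; simp [coeff_sliceV]
  | insert _ _ hx ih => rw [Finset.sum_insert hx, Finset.sum_insert hx, sliceV_add, ih]

lemma sliceV_monomial_mul (v : Fin 3) (j : ℕ) (d : Fin 3 →₀ ℕ) (c : ℝ)
    (a : MvPolynomial (Fin 3) ℝ) :
    sliceV v j (monomial d c * a) =
      if d v ≤ j then monomial (d.erase v) c * sliceV v (j - d v) a else 0 := by
  apply MvPolynomial.ext
  intro e
  rw [coeff_sliceV]
  by_cases hev : e v = 0
  · rw [if_pos hev]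
    rw [coeff_monomial_mul']
    by_cases hdv : d v ≤ j
    · rw [if_pos hdv, coeff_monomial_mul', coeff_sliceV]
      have hle : d ≤ e + Finsupp.single v j ↔ d.erase v ≤ e := by
        rw [Finsupp.le_def, Finsupp.le_def]
        constructor
        · intro h i
          by_cases hiv : i = v
          · subst hiv; simp [Finsupp.erase_same]
          · have := h i
            simpa [Finsupp.single_apply, Ne.symm hiv, Finsupp.erase_ne hiv] using this
        · intro h i
          by_cases hiv : i = v
          · subst hiv; simp [Finsupp.single_apply, hev]; omega
          · have := h i
            simpa [Finsupp.single_apply, Ne.symm hiv, Finsupp.erase_ne hiv] using this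
      by_cases hd : d ≤ e + Finsupp.single v j
      · rw [if_pos hd, if_pos (hle.mp hd)]
        have h2 : (e - d.erase v) v = 0 := by
          rw [Finsupp.tsub_apply, hev, Finsupp.erase_same]; rfl
        rw [if_pos h2]
        congr 2
        apply Finsupp.ext
        intro i
        by_cases hiv : i = v
        · subst hiv
          simp only [Finsupp.tsub_apply, Finsupp.add_apply, Finsupp.single_eq_same,
            Finsupp.erase_same, hev]
          omega
        · have h3 := (Finsupp.le_def.mp (hle.mp hd)) i
          rw [Finsupp.erase_ne hiv] at h3
          simp only [Finsupp.tsub_apply, Finsupp.add_apply,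
            Finsupp.single_eq_of_ne' (show v ≠ i from fun hh => hiv hh.symm),
            Finsupp.erase_ne hiv]
          omega
      · rw [if_neg hd, if_neg (fun hh => hd (hle.mpr hh))]
    · rw [if_neg hdv]
      have : ¬ d ≤ e + Finsupp.single v j := by
        intro h
        have := (Finsupp.le_def.mp h) v
        simp [Finsupp.single_apply, hev] at this
        omega
      rw [if_neg this]
      simp
  · rw [if_neg hev]
    split
    · rw [coeff_monomial_mul']
      split
      · rw [coeff_sliceV]
        have : (e - d.erase v) v ≠ 0 := by
          rw [Finsupp.tsub_apply, Finsupp.erase_same]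
          omega
        rw [if_neg this, mul_zero]
      · rfl
    · simp

lemma sliceV_mem {T : Set (MvPolynomial (Fin 3) ℝ)} {v : Fin 3}
    (hv : ∀ t ∈ T, ∀ e ∈ t.support, e v = 0) {f : MvPolynomial (Fin 3) ℝ}
    (hf : f ∈ Ideal.span T) (j : ℕ) : sliceV v j f ∈ Ideal.span T := by
  induction hf using Submodule.span_induction generalizing j with
  | mem t ht =>
    by_cases hj : j = 0
    · subst hj
      have : sliceV v 0 t = t := by
        apply MvPolynomial.ext
        intro e
        rw [coeff_sliceV]
        split
        · rw [Finsupp.single_zero, add_zero]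
        · next h =>
          symm
          rw [← notMem_support_iff]
          intro hmem
          exact h (hv t ht e hmem)
      rw [this]
      exact Ideal.subset_span ht
    · have : sliceV v j t = 0 := by
        apply MvPolynomial.ext
        intro e
        rw [coeff_sliceV]
        split
        · rw [coeff_zero, ← notMem_support_iff]
          intro hmem
          have := hv t ht _ hmem
          rw [Finsupp.add_apply, Finsupp.single_eq_same] at this
          omega
        · simp
      rw [this]
      exact Submodule.zero_mem _
  | zero =>
    have : sliceV v j 0 = 0 := by
      apply MvPolynomial.ext; intro e; rw [coeff_sliceV]; split <;> simp
    rw [this]; exact Submodule.zero_mem _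
  | add x y _ _ ihx ihy =>
    rw [sliceV_add]
    exact Submodule.add_mem _ (ihx j) (ihy j)
  | smul r x _ ih =>
    rw [smul_eq_mul]
    nth_rewrite 1 [as_sum r]
    rw [Finset.sum_mul, sliceV_sum]
    apply Submodule.sum_mem
    intro d _
    rw [sliceV_monomial_mul]
    split
    · exact Ideal.mul_mem_left _ _ (ih _)
    · exact Submodule.zero_mem _

attribute [local instance] MvPolynomial.gradedAlgebra

lemma homComp_mem {T : Set (MvPolynomial (Fin 3) ℝ)}
    (hh : ∀ t ∈ T, ∃ m, t.IsHomogeneous m) {f : MvPolynomial (Fin 3) ℝ}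
    (hf : f ∈ Ideal.span T) (n : ℕ) : (homogeneousComponent n f) ∈ Ideal.span T := by
  have hhom : Ideal.IsHomogeneous (homogeneousSubmodule (Fin 3) ℝ) (Ideal.span T) :=
    Ideal.homogeneous_span _ T (fun t ht => by
      obtain ⟨m, hm⟩ := hh t ht
      exact ⟨m, (mem_homogeneousSubmodule _ _).mpr hm⟩)
  have h2 := hhom n hf
  have hb : ((DirectSum.decompose (homogeneousSubmodule (Fin 3) ℝ) f n :
      homogeneousSubmodule (Fin 3) ℝ n) : MvPolynomial (Fin 3) ℝ)
      = homogeneousComponent n f := by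
    rw [← DirectSum.Decomposition.decompose'_eq]
    exact MvPolynomial.decomposition.decompose'_apply f n
  rwa [hb] at h2

lemma degree3 (d : Fin 3 →₀ ℕ) : Finsupp.degree d = d 0 + d 1 + d 2 := by
  rw [Finsupp.degree_apply]
  rw [Finset.sum_subset (Finset.subset_univ d.support)]
  · exact Fin.sum_univ_three d
  · intro i _ hi
    simpa using hi

lemma isHom_deg {t : MvPolynomial (Fin 3) ℝ} {m : ℕ} (ht : t.IsHomogeneous m)
    {e : Fin 3 →₀ ℕ} (he : e ∈ t.support) : e 0 + e 1 + e 2 = m := by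
  rw [← degree3, Finsupp.degree_eq_weight_one]
  exact ht (mem_support_iff.mp he)

noncomputable def divZ (c : ℕ) (p : MvPolynomial (Fin 3) ℝ) : MvPolynomial (Fin 3) ℝ :=
  AddMonoidAlgebra.ofCoeff
    (Finsupp.comapDomain (· + Finsupp.single 2 c) (AddMonoidAlgebra.coeff p) ((add_left_injective _).injOn))

lemma coeff_divZ (c : ℕ) (e : Fin 3 →₀ ℕ) (p : MvPolynomial (Fin 3) ℝ) :
    coeff e (divZ c p) = coeff (e + Finsupp.single 2 c) p := by
  show Finsupp.comapDomain _ _ _ e = _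
  rw [Finsupp.comapDomain_apply]
  rfl

lemma divZ_mul (c : ℕ) (p : MvPolynomial (Fin 3) ℝ) (h : ∀ e ∈ p.support, c ≤ e 2) :
    (monomial (Finsupp.single 2 c) 1) * divZ c p = p := by
  apply MvPolynomial.ext
  intro e
  rw [coeff_monomial_mul']
  split
  · next hle =>
    rw [one_mul, coeff_divZ]
    congr 1
    exact tsub_add_cancel_of_le hle
  · next hle =>
    symm
    rw [← notMem_support_iff]
    intro hmem
    exact hle (Finsupp.single_le_iff.mpr (h e hmem))


section Helpers
-- single coordinate helpers
lemma s3 (i j : Fin 3) (k : ℕ) : (Finsupp.single i k : Fin 3 →₀ ℕ) j = if i = j then k else 0 :=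
  Finsupp.single_apply

lemma repr3 (d : Fin 3 →₀ ℕ) :
    d = Finsupp.single 0 (d 0) + Finsupp.single 1 (d 1) + Finsupp.single 2 (d 2) := by
  apply Finsupp.ext
  intro i
  fin_cases i <;> simp [Finsupp.add_apply, s3]

lemma s00 (k : ℕ) : (Finsupp.single (0:Fin 3) k) 0 = k := Finsupp.single_eq_same
lemma s01 (k : ℕ) : (Finsupp.single (0:Fin 3) k) 1 = 0 := Finsupp.single_eq_of_ne (by decide)
lemma s02 (k : ℕ) : (Finsupp.single (0:Fin 3) k) 2 = 0 := Finsupp.single_eq_of_ne (by decide)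
lemma s10 (k : ℕ) : (Finsupp.single (1:Fin 3) k) 0 = 0 := Finsupp.single_eq_of_ne (by decide)
lemma s11 (k : ℕ) : (Finsupp.single (1:Fin 3) k) 1 = k := Finsupp.single_eq_same
lemma s12 (k : ℕ) : (Finsupp.single (1:Fin 3) k) 2 = 0 := Finsupp.single_eq_of_ne (by decide)
lemma s20 (k : ℕ) : (Finsupp.single (2:Fin 3) k) 0 = 0 := Finsupp.single_eq_of_ne (by decide)
lemma s21 (k : ℕ) : (Finsupp.single (2:Fin 3) k) 1 = 0 := Finsupp.single_eq_of_ne (by decide)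
lemma s22 (k : ℕ) : (Finsupp.single (2:Fin 3) k) 2 = k := Finsupp.single_eq_same

end Helpers

section Main

variable {T₁ T₂ : Set (MvPolynomial (Fin 3) ℝ)}

lemma gen_mem {I : Ideal (MvPolynomial (Fin 3) ℝ)} {p : MvPolynomial (Fin 3) ℝ}
    (hp : p ∈ I) (hne : p ≠ 0) : monomial (leadMon p) (1 : ℝ) ∈ initialIdeal I :=
  Ideal.subset_span ⟨p, hp, hne, rfl⟩

lemma key (hT₁h : ∀ p ∈ T₁, ∃ n : ℕ, p.IsHomogeneous n)
    (hT₂h : ∀ p ∈ T₂, ∃ n : ℕ, p.IsHomogeneous n)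
    (hT₁ : ∀ p ∈ T₁, ∀ e ∈ p.support, e 1 = 0)
    (hT₂ : ∀ p ∈ T₂, ∀ e ∈ p.support, e 0 = 0) :
    ∀ μ : Lex (Fin 3 →₀ ℕ), ∀ f g : MvPolynomial (Fin 3) ℝ,
      f ∈ Ideal.span T₁ → g ∈ Ideal.span T₂ →
      (∀ e ∈ f.support, toLex e ≤ μ) → (∀ e ∈ g.support, toLex e ≤ μ) →
      f + g ≠ 0 →
      monomial (leadMon (f + g)) (1 : ℝ) ∈
        initialIdeal (Ideal.span T₁) ⊔ initialIdeal (Ideal.span T₂) := by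
  intro μ
  induction μ using WellFoundedLT.induction with
  | _ μ IH =>
  intro f g hf hg hfb hgb hp
  set μf : Fin 3 →₀ ℕ := ofLex μ with hμf
  have hμτ : toLex μf = μ := rfl
  -- helper: recursion for strictly smaller supports
  have recurse : ∀ F G : MvPolynomial (Fin 3) ℝ, F ∈ Ideal.span T₁ → G ∈ Ideal.span T₂ →
      (∀ e ∈ F.support, toLex e < μ) → (∀ e ∈ G.support, toLex e < μ) → F + G = f + g →
      monomial (leadMon (f + g)) (1 : ℝ) ∈
        initialIdeal (Ideal.span T₁) ⊔ initialIdeal (Ideal.span T₂) := by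
    intro F G hF hG hFs hGs hFG
    have hne : F + G ≠ 0 := by rw [hFG]; exact hp
    have hU : (F.support ∪ G.support).Nonempty := by
      rcases (F.support ∪ G.support).eq_empty_or_nonempty with h | h
      swap
      · exact h
      · exfalso
        rw [Finset.union_eq_empty] at h
        apply hne
        rw [MvPolynomial.support_eq_empty.mp h.1, MvPolynomial.support_eq_empty.mp h.2, add_zero]
    have hUim : ((F.support ∪ G.support).image
        (toLex : (Fin 3 →₀ ℕ) → Lex (Fin 3 →₀ ℕ))).Nonempty := by
      rwa [Finset.image_nonempty]
    set μ' : Lex (Fin 3 →₀ ℕ) := ((F.support ∪ G.support).image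
        (toLex : (Fin 3 →₀ ℕ) → Lex (Fin 3 →₀ ℕ))).max' hUim with hμ'
    have hμ'lt : μ' < μ := by
      have := Finset.max'_mem _ hUim
      rw [Finset.mem_image] at this
      obtain ⟨e, he, hee⟩ := this
      rw [hμ', ← hee]
      rcases Finset.mem_union.mp he with h | h
      · exact hFs e h
      · exact hGs e h
    have h1 : ∀ e ∈ F.support, toLex e ≤ μ' := fun e he =>
      Finset.le_max' _ _ (Finset.mem_image_of_mem _ (Finset.mem_union_left _ he))
    have h2 : ∀ e ∈ G.support, toLex e ≤ μ' := fun e he =>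
      Finset.le_max' _ _ (Finset.mem_image_of_mem _ (Finset.mem_union_right _ he))
    have := IH μ' hμ'lt F G hF hG h1 h2 hne
    rwa [hFG] at this
  by_cases hpμ : coeff μf (f + g) ≠ 0
  · -- leading coefficient survives
    have hlm : leadMon (f + g) = μf := by
      apply leadMon_eq (mem_support_iff.mpr hpμ)
      intro e he
      rcases Finset.mem_union.mp (MvPolynomial.support_add he) with h | h
      · exact hfb e h
      · exact hgb e h
    rw [coeff_add] at hpμ
    by_cases hcf : coeff μf f ≠ 0
    · have hf0 : f ≠ 0 := fun h => hcf (by rw [h]; simp)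
      have : leadMon f = μf := by
        apply leadMon_eq (mem_support_iff.mpr hcf) hfb
      apply Submodule.mem_sup_left
      rw [hlm, ← this]
      exact gen_mem hf hf0
    · push_neg at hcf
      have hcg : coeff μf g ≠ 0 := by
        intro h
        rw [hcf, h] at hpμ
        simp at hpμ
      have hg0 : g ≠ 0 := fun h => hcg (by rw [h]; simp)
      have : leadMon g = μf := by
        apply leadMon_eq (mem_support_iff.mpr hcg) hgb
      apply Submodule.mem_sup_right
      rw [hlm, ← this]
      exact gen_mem hg hg0
  · push_neg at hpμ
    by_cases hcf : coeff μf f = 0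
    · -- f and g both avoid μ : strict decrease
      have hcg : coeff μf g = 0 := by
        have := hpμ
        rw [coeff_add, hcf, zero_add] at this
        exact this
      apply recurse f g hf hg ?_ ?_ rfl
      · intro e he
        refine lt_of_le_of_ne (hfb e he) ?_
        intro hh
        have : e = μf := toLex.injective hh
        rw [this] at he
        exact (mem_support_iff.mp he) hcf
      · intro e he
        refine lt_of_le_of_ne (hgb e he) ?_
        intro hh
        have : e = μf := toLex.injective hh
        rw [this] at he
        exact (mem_support_iff.mp he) hcg
    · -- the hard case: cancellation of leading terms
      have hcg : coeff μf g ≠ 0 := by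
        intro h
        rw [coeff_add, h, add_zero] at hpμ
        exact hcf hpμ
      -- abbreviations
      set a := μf 0 with ha
      set b := μf 1 with hb
      set c := μf 2 with hc
      set n := a + b + c with hn
      set ν₁ : Fin 3 →₀ ℕ := Finsupp.single 0 a + Finsupp.single 2 c with hν₁
      set ν₂ : Fin 3 →₀ ℕ := Finsupp.single 1 b + Finsupp.single 2 c with hν₂
      have hμrepr : μf = ν₁ + Finsupp.single 1 b := by
        rw [hν₁]
        nth_rewrite 1 [repr3 μf]
        rw [← ha, ← hb, ← hc]
        abel
      have hμrepr₂ : μf = ν₂ + Finsupp.single 0 a := by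
        rw [hν₂]
        nth_rewrite 1 [repr3 μf]
        rw [← ha, ← hb, ← hc]
        abel
      have hν₁0 : ν₁ 0 = a := by simp [hν₁, Finsupp.add_apply, s00, s20]
      have hν₁1 : ν₁ 1 = 0 := by simp [hν₁, Finsupp.add_apply, s01, s21]
      have hν₁2 : ν₁ 2 = c := by simp [hν₁, Finsupp.add_apply, s02, s22]
      have hν₂0 : ν₂ 0 = 0 := by simp [hν₂, Finsupp.add_apply, s10, s20]
      have hν₂1 : ν₂ 1 = b := by simp [hν₂, Finsupp.add_apply, s11, s21]
      have hν₂2 : ν₂ 2 = c := by simp [hν₂, Finsupp.add_apply, s12, s22]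
      have hdegμ : Finsupp.degree μf = n := by rw [degree3, ← ha, ← hb, ← hc, hn]
      set cf := coeff μf f with hcf'
      set cg := coeff μf g with hcg'
      have hsum : cf + cg = 0 := by rw [hcf', hcg', ← coeff_add, hpμ]
      set w₁ := sliceV 1 b (homogeneousComponent n f) with hw₁def
      set w₂ := sliceV 0 a (homogeneousComponent n g) with hw₂def
      have hw₁mem : w₁ ∈ Ideal.span T₁ := sliceV_mem hT₁ (homComp_mem hT₁h hf n) b
      have hw₂mem : w₂ ∈ Ideal.span T₂ := sliceV_mem hT₂ (homComp_mem hT₂h hg n) a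
      have hw₁supp : ∀ e, coeff e w₁ ≠ 0 →
          e 1 = 0 ∧ e 0 + e 2 = a + c ∧ (e = ν₁ ∨ (e 0 < a ∧ c < e 2)) := by
        intro e hce
        rw [hw₁def, coeff_sliceV] at hce
        by_cases h1 : e 1 = 0
        swap
        · rw [if_neg h1] at hce; exact absurd rfl hce
        rw [if_pos h1, coeff_homogeneousComponent] at hce
        by_cases h2 : Finsupp.degree (e + Finsupp.single 1 b) = n
        swap
        · rw [if_neg h2] at hce; exact absurd rfl hce
        rw [if_pos h2] at hce
        rw [degree3] at h2
        simp only [Finsupp.add_apply, s10, s11, s12, add_zero] at h2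
        have hdeg : e 0 + e 2 = a + c := by omega
        refine ⟨h1, hdeg, ?_⟩
        have hle := hfb _ (mem_support_iff.mpr hce)
        rw [← hμτ] at hle
        rcases lex_le_iff3.mp hle with heq | hlt
        · left
          rw [hμrepr] at heq
          exact add_right_cancel heq
        · right
          rw [lex_lt_iff3] at hlt
          simp only [Finsupp.add_apply, s10, s11, s12, add_zero] at hlt
          rcases hlt with h | ⟨_, h⟩ | ⟨h3, _, h4⟩ <;> omega
      have hw₂supp : ∀ e, coeff e w₂ ≠ 0 →
          e 0 = 0 ∧ e 1 + e 2 = b + c ∧ (e = ν₂ ∨ (e 1 < b ∧ c < e 2)) := by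
        intro e hce
        rw [hw₂def, coeff_sliceV] at hce
        by_cases h1 : e 0 = 0
        swap
        · rw [if_neg h1] at hce; exact absurd rfl hce
        rw [if_pos h1, coeff_homogeneousComponent] at hce
        by_cases h2 : Finsupp.degree (e + Finsupp.single 0 a) = n
        swap
        · rw [if_neg h2] at hce; exact absurd rfl hce
        rw [if_pos h2] at hce
        rw [degree3] at h2
        simp only [Finsupp.add_apply, s00, s01, s02, add_zero] at h2
        have hdeg : e 1 + e 2 = b + c := by omega
        refine ⟨h1, hdeg, ?_⟩
        have hle := hgb _ (mem_support_iff.mpr hce)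
        rw [← hμτ] at hle
        rcases lex_le_iff3.mp hle with heq | hlt
        · left
          rw [hμrepr₂] at heq
          exact add_right_cancel heq
        · right
          rw [lex_lt_iff3] at hlt
          simp only [Finsupp.add_apply, s00, s01, s02, add_zero] at hlt
          rcases hlt with h | ⟨_, h⟩ | ⟨h3, _, h4⟩ <;> omega
      have hcw₁ : coeff ν₁ w₁ = cf := by
        rw [hw₁def, coeff_sliceV, if_pos hν₁1, ← hμrepr, coeff_homogeneousComponent,
          if_pos hdegμ, hcf']
      have hcw₂ : coeff ν₂ w₂ = cg := by
        rw [hw₂def, coeff_sliceV, if_pos hν₂0, ← hμrepr₂, coeff_homogeneousComponent,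
          if_pos hdegμ, hcg']
      set r₁ := w₁ - monomial ν₁ cf with hr₁def
      set r₂ := w₂ - monomial ν₂ cg with hr₂def
      have hr₁supp : ∀ e, coeff e r₁ ≠ 0 → e 1 = 0 ∧ e 0 < a ∧ c < e 2 ∧ e 0 + e 2 = a + c := by
        intro e hce
        rw [hr₁def, coeff_sub, coeff_monomial] at hce
        by_cases hee : ν₁ = e
        · rw [if_pos hee, ← hee, hcw₁, sub_self] at hce; exact absurd rfl hce
        · rw [if_neg hee, sub_zero] at hce
          obtain ⟨h1, h2, h3⟩ := hw₁supp e hce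
          rcases h3 with h | h
          · exact absurd h.symm hee
          · exact ⟨h1, h.1, h.2, h2⟩
      have hr₂supp : ∀ e, coeff e r₂ ≠ 0 → e 0 = 0 ∧ e 1 < b ∧ c < e 2 ∧ e 1 + e 2 = b + c := by
        intro e hce
        rw [hr₂def, coeff_sub, coeff_monomial] at hce
        by_cases hee : ν₂ = e
        · rw [if_pos hee, ← hee, hcw₂, sub_self] at hce; exact absurd rfl hce
        · rw [if_neg hee, sub_zero] at hce
          obtain ⟨h1, h2, h3⟩ := hw₂supp e hce
          rcases h3 with h | h
          · exact absurd h.symm hee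
          · exact ⟨h1, h.1, h.2, h2⟩
      have hdiv₁ : monomial (Finsupp.single 2 c) (1:ℝ) * divZ c r₁ = r₁ :=
        divZ_mul _ _ (fun e he => (hr₁supp e (mem_support_iff.mp he)).2.2.1.le)
      have hdiv₂ : monomial (Finsupp.single 2 c) (1:ℝ) * divZ c r₂ = r₂ :=
        divZ_mul _ _ (fun e he => (hr₂supp e (mem_support_iff.mp he)).2.2.1.le)
      have hdr₁supp : ∀ e, coeff e (divZ c r₁) ≠ 0 → e 1 = 0 ∧ e 0 < a := by
        intro e hce
        rw [coeff_divZ] at hce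
        obtain ⟨h1, h2, _, _⟩ := hr₁supp _ hce
        simp only [Finsupp.add_apply, s20, s21, add_zero] at h1 h2
        exact ⟨h1, h2⟩
      have hdr₂supp : ∀ e, coeff e (divZ c r₂) ≠ 0 → e 0 = 0 ∧ e 1 < b := by
        intro e hce
        rw [coeff_divZ] at hce
        obtain ⟨h1, h2, _, _⟩ := hr₂supp _ hce
        simp only [Finsupp.add_apply, s20, s21, add_zero] at h1 h2
        exact ⟨h1, h2⟩
      have hprod₁ : ∀ e, coeff e (divZ c r₂ * w₁) ≠ 0 → toLex e < μ := by
        intro e hce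
        have hmem := MvPolynomial.support_mul _ _ (mem_support_iff.mpr hce)
        rw [Finset.mem_add] at hmem
        obtain ⟨d, hd, d', hd', rfl⟩ := hmem
        obtain ⟨hd0, hd1⟩ := hdr₂supp d (mem_support_iff.mp hd)
        obtain ⟨hd'1, hdeg', hor⟩ := hw₁supp d' (mem_support_iff.mp hd')
        have hd'0 : d' 0 ≤ a := by
          rcases hor with h | h
          · rw [h, hν₁0]
          · exact h.1.le
        rw [← hμτ, lex_lt_iff3]
        simp only [Finsupp.add_apply]
        omega
      have hprod₂ : ∀ e, coeff e (divZ c r₁ * w₂) ≠ 0 → toLex e < μ := by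
        intro e hce
        have hmem := MvPolynomial.support_mul _ _ (mem_support_iff.mpr hce)
        rw [Finset.mem_add] at hmem
        obtain ⟨d, hd, d', hd', rfl⟩ := hmem
        obtain ⟨hd1, hd0⟩ := hdr₁supp d (mem_support_iff.mp hd)
        obtain ⟨hd'0, _, _⟩ := hw₂supp d' (mem_support_iff.mp hd')
        rw [← hμτ, lex_lt_iff3]
        simp only [Finsupp.add_apply]
        omega
      have hzne : (monomial (Finsupp.single 2 c) (1:ℝ) : MvPolynomial (Fin 3) ℝ) ≠ 0 := by
        rw [Ne, MvPolynomial.monomial_eq_zero]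
        exact one_ne_zero
      have hcfne : cf ≠ 0 := hcf
      have hCC : C cf⁻¹ * C cf = (1 : MvPolynomial (Fin 3) ℝ) := by
        rw [← C_mul, inv_mul_cancel₀ hcfne, C_1]
      have hmon₁ : (monomial ν₁ cf : MvPolynomial (Fin 3) ℝ)
          = C cf * (monomial (Finsupp.single 2 c) 1 * monomial (Finsupp.single 0 a) 1) := by
        have hcomm : ν₁ = Finsupp.single 2 c + Finsupp.single 0 a := by rw [hν₁, add_comm]
        rw [monomial_mul, one_mul, C_mul_monomial, mul_one, hcomm]
      have hmon₂ : (monomial ν₂ cg : MvPolynomial (Fin 3) ℝ)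
          = C cg * (monomial (Finsupp.single 2 c) 1 * monomial (Finsupp.single 1 b) 1) := by
        have hcomm : ν₂ = Finsupp.single 2 c + Finsupp.single 1 b := by rw [hν₂, add_comm]
        rw [monomial_mul, one_mul, C_mul_monomial, mul_one, hcomm]
      have hCg : (C cg : MvPolynomial (Fin 3) ℝ) = - C cf := by
        have : cg = -cf := by linarith
        rw [this, map_neg]
      have hid : monomial (Finsupp.single 1 b) (1:ℝ) * w₁ + monomial (Finsupp.single 0 a) 1 * w₂
          = C cf⁻¹ * (divZ c r₂ * w₁ - divZ c r₁ * w₂) := by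
        apply mul_left_cancel₀ hzne
        have expand : monomial (Finsupp.single 2 c) (1:ℝ)
              * (C cf⁻¹ * (divZ c r₂ * w₁ - divZ c r₁ * w₂))
            = C cf⁻¹ * ((monomial (Finsupp.single 2 c) (1:ℝ) * divZ c r₂) * w₁
                - (monomial (Finsupp.single 2 c) (1:ℝ) * divZ c r₁) * w₂) := by
          ring
        rw [expand, hdiv₁, hdiv₂, hr₁def, hr₂def, hmon₁, hmon₂, hCg]
        linear_combination (-(monomial (Finsupp.single 2 c) (1:ℝ) *
          (monomial (Finsupp.single 1 b) (1:ℝ) * w₁ + monomial (Finsupp.single 0 a) 1 * w₂))) * hCC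
      set F := f - monomial (Finsupp.single 1 b) (1:ℝ) * w₁ + C cf⁻¹ * (divZ c r₂ * w₁) with hFdef
      set G := g - monomial (Finsupp.single 0 a) (1:ℝ) * w₂ - C cf⁻¹ * (divZ c r₁ * w₂) with hGdef
      have hFG : F + G = f + g := by
        rw [hFdef, hGdef]
        linear_combination -hid
      have hFmem : F ∈ Ideal.span T₁ := by
        apply Submodule.add_mem
        · exact Submodule.sub_mem _ hf (Ideal.mul_mem_left _ _ hw₁mem)
        · exact Ideal.mul_mem_left _ _ (Ideal.mul_mem_left _ _ hw₁mem)
      have hGmem : G ∈ Ideal.span T₂ := by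
        apply Submodule.sub_mem
        · exact Submodule.sub_mem _ hg (Ideal.mul_mem_left _ _ hw₂mem)
        · exact Ideal.mul_mem_left _ _ (Ideal.mul_mem_left _ _ hw₂mem)
      have hb' : Finsupp.single 1 b ≤ μf := Finsupp.single_le_iff.mpr (le_of_eq hb)
      have ha' : Finsupp.single 0 a ≤ μf := Finsupp.single_le_iff.mpr (le_of_eq ha)
      have hcyw₁ : coeff μf (monomial (Finsupp.single 1 b) (1:ℝ) * w₁) = cf := by
        rw [coeff_monomial_mul', if_pos hb', one_mul]
        nth_rewrite 1 [hμrepr]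
        rw [add_tsub_cancel_right, hcw₁]
      have hcxw₂ : coeff μf (monomial (Finsupp.single 0 a) (1:ℝ) * w₂) = cg := by
        rw [coeff_monomial_mul', if_pos ha', one_mul]
        nth_rewrite 1 [hμrepr₂]
        rw [add_tsub_cancel_right, hcw₂]
      have hc₁ : coeff μf (divZ c r₂ * w₁) = 0 := by
        by_contra hcon
        exact absurd (hprod₁ _ hcon) (by rw [hμτ]; exact lt_irrefl μ)
      have hc₂ : coeff μf (divZ c r₁ * w₂) = 0 := by
        by_contra hcon
        exact absurd (hprod₂ _ hcon) (by rw [hμτ]; exact lt_irrefl μ)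
      have hFμ : coeff μf F = 0 := by
        rw [hFdef, coeff_add, coeff_sub, hcyw₁, coeff_C_mul, hc₁, mul_zero, add_zero,
          ← hcf', sub_self]
      have hGμ : coeff μf G = 0 := by
        rw [hGdef, coeff_sub, coeff_sub, hcxw₂, coeff_C_mul, hc₂, mul_zero, sub_zero,
          ← hcg', sub_self]
      have hFs : ∀ e ∈ F.support, toLex e < μ := by
        intro e he
        have hcoe := mem_support_iff.mp he
        have hnee : e ≠ μf := by
          intro hh
          rw [hh] at hcoe
          exact hcoe hFμ
        have hle : toLex e ≤ μ := by
          rw [hFdef, coeff_add, coeff_sub] at hcoe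
          by_cases h1 : coeff e f ≠ 0
          · exact hfb e (mem_support_iff.mpr h1)
          by_cases h2 : coeff e (C cf⁻¹ * (divZ c r₂ * w₁)) ≠ 0
          · rw [coeff_C_mul] at h2
            have h2' : coeff e (divZ c r₂ * w₁) ≠ 0 := fun hh => h2 (by rw [hh, mul_zero])
            exact (hprod₁ _ h2').le
          push_neg at h1 h2
          have h3 : coeff e (monomial (Finsupp.single 1 b) (1:ℝ) * w₁) ≠ 0 := by
            intro hh
            rw [h1, hh, h2] at hcoe
            simp at hcoe
          rw [coeff_monomial_mul'] at h3
          by_cases h4 : Finsupp.single 1 b ≤ e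
          swap
          · rw [if_neg h4] at h3; exact absurd rfl h3
          rw [if_pos h4, one_mul] at h3
          obtain ⟨hh1, hh2, hor⟩ := hw₁supp _ h3
          rcases hor with h | h
          · have : e = μf := by
              rw [hμrepr, ← h]
              exact (tsub_add_cancel_of_le h4).symm
            exact le_of_eq (by rw [this, hμτ])
          · have h5 : e 0 < a := by
              have := h.1
              simp only [Finsupp.tsub_apply, s10] at this
              omega
            apply le_of_lt
            rw [← hμτ, lex_lt_iff3]
            left
            omega
        refine lt_of_le_of_ne hle ?_
        intro hh
        exact hnee (congrArg ofLex hh)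
      have hGs : ∀ e ∈ G.support, toLex e < μ := by
        intro e he
        have hcoe := mem_support_iff.mp he
        have hnee : e ≠ μf := by
          intro hh
          rw [hh] at hcoe
          exact hcoe hGμ
        have hle : toLex e ≤ μ := by
          rw [hGdef, coeff_sub, coeff_sub] at hcoe
          by_cases h1 : coeff e g ≠ 0
          · exact hgb e (mem_support_iff.mpr h1)
          by_cases h2 : coeff e (C cf⁻¹ * (divZ c r₁ * w₂)) ≠ 0
          · rw [coeff_C_mul] at h2
            have h2' : coeff e (divZ c r₁ * w₂) ≠ 0 := fun hh => h2 (by rw [hh, mul_zero])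
            exact (hprod₂ _ h2').le
          push_neg at h1 h2
          have h3 : coeff e (monomial (Finsupp.single 0 a) (1:ℝ) * w₂) ≠ 0 := by
            intro hh
            rw [h1, hh, h2] at hcoe
            simp at hcoe
          rw [coeff_monomial_mul'] at h3
          by_cases h4 : Finsupp.single 0 a ≤ e
          swap
          · rw [if_neg h4] at h3; exact absurd rfl h3
          rw [if_pos h4, one_mul] at h3
          obtain ⟨hh1, hh2, hor⟩ := hw₂supp _ h3
          rcases hor with h | h
          · have : e = μf := by
              rw [hμrepr₂, ← h]
              exact (tsub_add_cancel_of_le h4).symm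
            exact le_of_eq (by rw [this, hμτ])
          · have h40 : a ≤ e 0 := by
              have := Finsupp.le_def.mp h4 0
              simpa [s00] using this
            have h50 : e 0 = a := by
              have := hh1
              simp only [Finsupp.tsub_apply, s00] at this
              omega
            have h5 : e 1 < b := by
              have := h.1
              simp only [Finsupp.tsub_apply, s01] at this
              omega
            apply le_of_lt
            rw [← hμτ, lex_lt_iff3]
            right; left
            omega
        refine lt_of_le_of_ne hle ?_
        intro hh
        exact hnee (congrArg ofLex hh)
      exact recurse F G hFmem hGmem hFs hGs hFG


/-- Let `Q₁ = T₁·S` and `Q₂ = T₂·S` be homogeneous ideals of `S = ℝ[x,y,z]` extended from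
`ℝ[x,z]` and `ℝ[y,z]` respectively (each generator of `T₁` involves only `x, z` and is
homogeneous, each generator of `T₂` involves only `y, z` and is homogeneous).  Then with
respect to the lex order `x > y > z`, `In(Q₁ + Q₂) = In(Q₁) + In(Q₂)`. -/
theorem stmt_7 (T₁ T₂ : Set (MvPolynomial (Fin 3) ℝ))
    (hT₁h : ∀ p ∈ T₁, ∃ n : ℕ, p.IsHomogeneous n)
    (hT₂h : ∀ p ∈ T₂, ∃ n : ℕ, p.IsHomogeneous n)
    (hT₁ : ∀ p ∈ T₁, ∀ e ∈ p.support, e 1 = 0)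
    (hT₂ : ∀ p ∈ T₂, ∀ e ∈ p.support, e 0 = 0) :
    initialIdeal (Ideal.span T₁ ⊔ Ideal.span T₂)
      = initialIdeal (Ideal.span T₁) ⊔ initialIdeal (Ideal.span T₂) := by
  apply le_antisymm
  · rw [initialIdeal]
    apply Ideal.span_le.mpr
    rintro q ⟨p, hp, hp0, rfl⟩
    obtain ⟨f, hfm, g, hgm, hfg⟩ := Submodule.mem_sup.mp hp
    have hne : f + g ≠ 0 := by rw [hfg]; exact hp0
    have hU : (f.support ∪ g.support).Nonempty := by
      rcases (f.support ∪ g.support).eq_empty_or_nonempty with h | h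
      swap
      · exact h
      · exfalso
        rw [Finset.union_eq_empty] at h
        apply hne
        rw [MvPolynomial.support_eq_empty.mp h.1, MvPolynomial.support_eq_empty.mp h.2, add_zero]
    have hUim : ((f.support ∪ g.support).image
        (toLex : (Fin 3 →₀ ℕ) → Lex (Fin 3 →₀ ℕ))).Nonempty := by
      rwa [Finset.image_nonempty]
    set μ : Lex (Fin 3 →₀ ℕ) := ((f.support ∪ g.support).image
        (toLex : (Fin 3 →₀ ℕ) → Lex (Fin 3 →₀ ℕ))).max' hUim with hμ
    have h1 : ∀ e ∈ f.support, toLex e ≤ μ := fun e he =>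
      Finset.le_max' _ _ (Finset.mem_image_of_mem _ (Finset.mem_union_left _ he))
    have h2 : ∀ e ∈ g.support, toLex e ≤ μ := fun e he =>
      Finset.le_max' _ _ (Finset.mem_image_of_mem _ (Finset.mem_union_right _ he))
    have := key hT₁h hT₂h hT₁ hT₂ μ f g hfm hgm h1 h2 hne
    rwa [hfg] at this
  · have mono : ∀ I J : Ideal (MvPolynomial (Fin 3) ℝ), I ≤ J →
        initialIdeal I ≤ initialIdeal J := by
      intro I J h
      apply Ideal.span_mono
      rintro q ⟨p, hp, h0, hq⟩
      exact ⟨p, h hp, h0, hq⟩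
    exact sup_le (mono _ _ le_sup_left) (mono _ _ le_sup_right)

end Main
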